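/- If 𝓑 is a countable family of Borel subsets of 2^ℕ, then the union of 𝓑, viewed as a family of subsets of ℕ, is not a free ultrafilter on ℕ (hence 𝔲_B ≥ ℵ₁). -/

import Mathlib

/-- Identify `x : ℕ → Bool` with the subset `{n | x n = true}` of `ℕ`. -/
def toSet (x : ℕ → Bool) : Set ℕ := {n | x n = true}

/-- A free ultrafilter is one containing all cofinite sets. -/
def IsFree (U : Ultrafilter ℕ) : Prop := ∀ s : Set ℕ, s.Finite → sᶜ ∈ U

/-!
Were the free ultrafilter `U` such a union, `A = {x | toSet x ∈ U}` would be Borel, hence differ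
from an open set `u` by a meagre set. Since `U` is free, flipping every coordinate from `n` on
carries `A` onto its complement. If `u` is empty, `A` is meagre; otherwise `A` is comeagre on a
cylinder inside `u` fixing the first `n` coordinates. Either way the flip preserves the open set
in question while exchanging `A` and `Aᶜ`, so that open set is meagre, contradicting the Baire
category theorem.
-/

open Filter Set PiNat

lemma toSet_injective : Function.Injective toSet := fun _ _ h =>
  funext fun n => Bool.eq_iff_iff.mpr (Set.ext_iff.mp h n)

lemma IsFree.le_cofinite {U : Ultrafilter ℕ} (hU : IsFree U) : (U : Filter ℕ) ≤ cofinite :=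
  fun s hs => by simpa using hU sᶜ (mem_cofinite.mp hs)

lemma IsFree.mem_iff_of_eventuallyEq {U : Ultrafilter ℕ} (hU : IsFree U) {s t : Set ℕ}
    (h : s =ᶠ[cofinite] t) : s ∈ U ↔ t ∈ U :=
  eventually_congr (eventuallyEq_set.mp (h.filter_mono hU.le_cofinite))

def flipFrom (n : ℕ) : (ℕ → Bool) ≃ₜ (ℕ → Bool) :=
  Homeomorph.piCongrRight fun i =>
    if i < n then Homeomorph.refl Bool else Equiv.boolNot.toHomeomorphOfDiscrete

lemma flipFrom_apply (n : ℕ) (x : ℕ → Bool) (i : ℕ) :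
    flipFrom n x i = if i < n then x i else !x i := by
  simp only [flipFrom, Homeomorph.piCongrRight_apply]
  split_ifs <;> rfl

lemma preimage_flipFrom_cylinder (n : ℕ) (x : ℕ → Bool) :
    flipFrom n ⁻¹' cylinder x n = cylinder x n := by
  ext y
  simp only [mem_preimage, mem_cylinder_iff]
  exact forall₂_congr fun i hi => by rw [flipFrom_apply, if_pos hi]

lemma toSet_flipFrom_eventuallyEq (n : ℕ) (x : ℕ → Bool) :
    toSet (flipFrom n x) =ᶠ[cofinite] (toSet x)ᶜ := by
  refine eventuallyEq_set.mpr ?_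
  rw [Nat.cofinite_eq_atTop]
  filter_upwards [eventually_ge_atTop n] with i hi
  change flipFrom n x i = true ↔ ¬x i = true
  simp [flipFrom_apply, not_lt.mpr hi]

lemma IsFree.toSet_flipFrom_mem_iff {U : Ultrafilter ℕ} (hU : IsFree U) (n : ℕ)
    (x : ℕ → Bool) : toSet (flipFrom n x) ∈ U ↔ toSet x ∉ U :=
  (hU.mem_iff_of_eventuallyEq (toSet_flipFrom_eventuallyEq n x)).trans
    Ultrafilter.compl_mem_iff_notMem

lemma not_isMeagre_inter_of_preimage_eq_compl {X : Type*} [TopologicalSpace X] [BaireSpace X]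
    {A C : Set X} (φ : X ≃ₜ X) (hA : φ ⁻¹' A = Aᶜ) (hC : φ ⁻¹' C = C) (hCo : IsOpen C)
    (hCne : C.Nonempty) : ¬ IsMeagre (C ∩ A) := by
  intro hCA
  have hCAc : IsMeagre (C ∩ Aᶜ) := by
    simpa only [preimage_inter, hA, hC] using hCA.preimage_of_isOpenMap φ.continuous φ.isOpenMap
  exact not_isMeagre_of_isOpen hCo hCne (inter_union_compl C A ▸ hCA.union hCAc)

theorem not_baireMeasurableSet_of_preimage_flipFrom {A : Set (ℕ → Bool)}
    (hA : ∀ n, flipFrom n ⁻¹' A = Aᶜ) : ¬ BaireMeasurableSet A := by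
  intro hBM
  obtain ⟨u, hu, hAu⟩ := hBM.residualEq_isOpen
  rcases u.eq_empty_or_nonempty with rfl | ⟨x, hx⟩
  · refine not_isMeagre_inter_of_preimage_eq_compl (flipFrom 0) (hA 0) preimage_univ isOpen_univ
      univ_nonempty ?_
    filter_upwards [eventuallyEq_set.mp hAu] with y hy
    simpa using hy
  · obtain ⟨-, ⟨y, n, rfl⟩, hxC, hCu⟩ :=
      (isTopologicalBasis_cylinders _).exists_subset_of_mem_open hx hu
    have hAc : flipFrom n ⁻¹' Aᶜ = Aᶜᶜ := by rw [preimage_compl, hA]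
    refine not_isMeagre_inter_of_preimage_eq_compl (flipFrom n) hAc
      (preimage_flipFrom_cylinder n y) (isOpen_cylinder _ y n) ⟨x, hxC⟩ ?_
    filter_upwards [eventuallyEq_set.mp hAu] with z hz ⟨hzC, hzA⟩
    exact hzA (hz.mpr (hCu hzC))

/-- The union of a countable family of Borel subsets of `2^ℕ`, viewed as a family
of subsets of `ℕ`, is never a free ultrafilter on `ℕ`. -/
theorem countable_borel_union_not_free_ultrafilter (𝓑 : Set (Set (ℕ → Bool)))
    (hct : 𝓑.Countable) (hBorel : ∀ B ∈ 𝓑, MeasurableSet B)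
    (U : Ultrafilter ℕ) (hfree : IsFree U) :
    toSet '' ⋃₀ 𝓑 ≠ {s : Set ℕ | s ∈ U} := by
  intro hU
  have hA : toSet ⁻¹' {s | s ∈ U} = ⋃₀ 𝓑 := by
    rw [← hU, toSet_injective.preimage_image]
  refine not_baireMeasurableSet_of_preimage_flipFrom (fun n => ?_)
    (hA ▸ (MeasurableSet.sUnion hct hBorel).baireMeasurableSet)
  ext x
  exact hfree.toSet_flipFrom_mem_iff n x
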